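/- arXiv:1607.07067 — 4 statements merged into one kernel-verified Lean document; each statement's English description precedes it below -/
import Mathlib

section
/- For all integers m ≥ 1 and n ≥ 0 one has [D(−e₂), [D(−e₁), (∂₁^m ∂₂^n D)(e₁)]] = −n(m+1) · (∂₁^m ∂₂^n D)(e₁). -/
/-- Difference derivative in direction `e₁` for functions on `ℤ²`. -/
def ddx {V : Type*} [AddCommGroup V] (f : ℤ × ℤ → V) : ℤ × ℤ → V :=
  fun s => f (s.1 + 1, s.2) - f s

/-- Difference derivative in direction `e₂` for functions on `ℤ²`. -/
def ddy {V : Type*} [AddCommGroup V] (f : ℤ × ℤ → V) : ℤ × ℤ → V :=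
  fun s => f (s.1, s.2 + 1) - f s

/-!
Bracketing with `D(-e₁)` acts on `D` as multiplication by the additive weight `s ↦ -s₂`, applied
to `D(-e₁) + (∂₁D)(s - e₁)`; bracketing with `D(-e₂)` acts as multiplication by `s ↦ s₁`, applied
to `D(-e₂) + (∂₂D)(s - e₂)`. Brackets commute with difference operators, so the discrete Leibniz
rule `∂ₕⁿ(φ g) = φ ∂ₕⁿ g + n φ(h) (∂ₕⁿ⁻¹ g)(· + h)` for additive `φ` gives
`[D(-e₁), ∂₁ᵐ∂₂ⁿD(e₁)] = -n ∂₁ᵐ⁺¹∂₂ⁿ⁻¹D(e₂)` and `[D(-e₂), ∂₁ᵐ⁺¹∂₂ⁿ⁻¹D(e₂)] = (m+1) ∂₁ᵐ∂₂ⁿD(e₁)`: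
the weight vanishes at the evaluation point, and `∂₁ᵐ` with `m ≥ 1` kills the constants.
-/

open Function

section FwdDiff

variable {M G : Type*} [AddCommMonoid M] [AddCommGroup G]

lemma fwdDiff_commute (h k : M) :
    Function.Commute (fwdDiff h : (M → G) → M → G) (fwdDiff k) := by
  intro f
  funext y
  simp only [fwdDiff, add_right_comm y h k]
  abel

lemma fwdDiff_iter_const_of_ne_zero (h : M) (c : G) {n : ℕ} (hn : n ≠ 0) :
    (fwdDiff h)^[n] (fun _ : M ↦ c) = 0 := by
  obtain ⟨n, rfl⟩ := Nat.exists_eq_succ_of_ne_zero hn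
  rw [iterate_succ_apply, fwdDiff_const]
  exact iterate_fixed (fwdDiff_const h 0) n

lemma fwdDiff_iter_fwdDiff_iter_const_add (h k : M) (c : G) {m : ℕ} (hm : m ≠ 0) (n : ℕ)
    (f : M → G) :
    (fwdDiff h)^[m] ((fwdDiff k)^[n] fun x ↦ c + f x) = (fwdDiff h)^[m] ((fwdDiff k)^[n] f) := by
  have hc : (fwdDiff h)^[m] ((fwdDiff k)^[n] fun _ ↦ c) = 0 := by
    rw [(fwdDiff_commute h k).iterate_iterate m n, fwdDiff_iter_const_of_ne_zero h c hm]
    exact iterate_fixed (fwdDiff_const k 0) n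
  rw [show (fun x ↦ c + f x) = (fun _ ↦ c) + f from rfl, fwdDiff_iter_add, fwdDiff_iter_add, hc,
    zero_add]

lemma fwdDiff_iter_comp_addMonoidHom {G' F : Type*} [AddCommGroup G'] [FunLike F G G']
    [AddMonoidHomClass F G G'] (h : M) (φ : F) (f : M → G) (n : ℕ) :
    (fwdDiff h)^[n] (φ ∘ f) = φ ∘ (fwdDiff h)^[n] f := by
  have : Semiconj (φ ∘ ·) (fwdDiff h : (M → G) → M → G) (fwdDiff h) := fun f ↦ by
    funext y
    simp [fwdDiff, map_sub]
  exact (this.iterate_right n f).symm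

variable {R : Type*} [Ring R] [Module R G]

lemma fwdDiff_smul_addMonoidHom (h : M) (φ : M →+ R) (g : M → G) :
    fwdDiff h (fun x ↦ φ x • g x) =
      (fun x ↦ φ x • fwdDiff h g x) + φ h • fun x ↦ g (x + h) := by
  funext x
  simp only [fwdDiff, map_add, add_smul, smul_sub, Pi.add_apply, Pi.smul_apply]
  abel

lemma fwdDiff_iter_succ_smul_addMonoidHom (h : M) (φ : M →+ R) (g : M → G) (n : ℕ) :
    (fwdDiff h)^[n + 1] (fun x ↦ φ x • g x) =
      (fun x ↦ φ x • (fwdDiff h)^[n + 1] g x) +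
        ((n + 1) • φ h) • fun x ↦ (fwdDiff h)^[n] g (x + h) := by
  induction n generalizing g with
  | zero => simpa using fwdDiff_smul_addMonoidHom h φ g
  | succ n ih =>
    rw [iterate_succ_apply, fwdDiff_smul_addMonoidHom, fwdDiff_iter_add, ih,
      fwdDiff_iter_const_smul]
    funext x
    simp only [Pi.add_apply, Pi.smul_apply, fwdDiff_iter_comp_add, ← iterate_succ_apply,
      Nat.succ_eq_add_one]
    rw [succ_nsmul (φ h) (n + 1), add_smul ((n + 1) • φ h), add_assoc]

lemma fwdDiff_iter_smul_addMonoidHom (h : M) (φ : M →+ R) (g : M → G) (n : ℕ) :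
    (fwdDiff h)^[n] (fun x ↦ φ x • g x) =
      (fun x ↦ φ x • (fwdDiff h)^[n] g x) +
        (n • φ h) • fun x ↦ (fwdDiff h)^[n - 1] g (x + h) := by
  -- `n - 1` truncates at `n = 0`, where the coefficient `n • φ h` vanishes.
  cases n with
  | zero => simp
  | succ n => exact fwdDiff_iter_succ_smul_addMonoidHom h φ g n

lemma fwdDiff_iter_smul_addMonoidHom_of_eq_zero (h : M) (φ : M →+ R) (hφ : φ h = 0)
    (g : M → G) (n : ℕ) :
    (fwdDiff h)^[n] (fun x ↦ φ x • g x) = fun x ↦ φ x • (fwdDiff h)^[n] g x := by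
  simpa [hφ] using fwdDiff_iter_smul_addMonoidHom h φ g n

end FwdDiff

lemma ddx_eq_fwdDiff {V : Type*} [AddCommGroup V] :
    (ddx : (ℤ × ℤ → V) → ℤ × ℤ → V) = fwdDiff (1, 0) := by
  funext f s
  simp [ddx, fwdDiff, Prod.add_def]

lemma ddy_eq_fwdDiff {V : Type*} [AddCommGroup V] :
    (ddy : (ℤ × ℤ → V) → ℤ × ℤ → V) = fwdDiff (0, 1) := by
  funext f s
  simp [ddy, fwdDiff, Prod.add_def]

def HasDetBracket {L : Type*} [LieRing L] (D : ℤ × ℤ → L) : Prop :=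
  ∀ r s : ℤ × ℤ, ⁅D r, D s⁆ = (r.1 * s.2 - r.2 * s.1) • (D r + D s - D (r + s))

section HasDetBracket

variable {L : Type*} [LieRing L] {D : ℤ × ℤ → L}

lemma ad_D_neg_e₁_comp (hD : HasDetBracket D) :
    LieAlgebra.ad ℤ L (D (-1, 0)) ∘ D = fun s ↦
      (-AddMonoidHom.snd ℤ ℤ) s • (D (-1, 0) + fwdDiff (1, 0) D (s + (-1, 0))) := by
  funext s
  have hs : s + (-1, 0) + (1, 0) = s := by ext <;> simp
  rw [comp_apply, LieAlgebra.ad_apply, hD, add_comm _ s, add_sub_assoc]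
  simp only [fwdDiff, hs, AddMonoidHom.neg_apply, AddMonoidHom.coe_snd]
  congr 1
  ring

lemma lie_D_neg_e₁_fwdDiff_iter (hD : HasDetBracket D) {m : ℕ} (hm : 0 < m) (n : ℕ) :
    ⁅D (-1, 0), (fwdDiff (1, 0))^[m] ((fwdDiff (0, 1))^[n] D) (1, 0)⁆ =
      -(n • (fwdDiff (1, 0))^[m + 1] ((fwdDiff (0, 1))^[n - 1] D) (0, 1)) := by
  rw [← LieAlgebra.ad_apply (R := ℤ), ← comp_apply (f := LieAlgebra.ad ℤ L _),
    ← fwdDiff_iter_comp_addMonoidHom, ← fwdDiff_iter_comp_addMonoidHom, ad_D_neg_e₁_comp hD,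
    fwdDiff_iter_smul_addMonoidHom, fwdDiff_iter_add, fwdDiff_iter_const_smul,
    fwdDiff_iter_smul_addMonoidHom_of_eq_zero _ _ (by simp)]
  have hshift := funext fun x ↦ fwdDiff_iter_comp_add (0, 1) (fwdDiff (1, 0) D) (-1, 0) (n - 1) x
  simp only [Pi.add_apply, Pi.smul_apply, fwdDiff_iter_comp_add,
    fwdDiff_iter_fwdDiff_iter_const_add _ _ _ hm.ne', hshift]
  rw [← (fwdDiff_commute (1, 0) (0, 1)).iterate_right (n - 1) D, ← iterate_succ_apply]
  simp

lemma ad_D_neg_e₂_comp (hD : HasDetBracket D) :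
    LieAlgebra.ad ℤ L (D (0, -1)) ∘ D = fun s ↦
      AddMonoidHom.fst ℤ ℤ s • (D (0, -1) + fwdDiff (0, 1) D (s + (0, -1))) := by
  funext s
  have hs : s + (0, -1) + (0, 1) = s := by ext <;> simp
  rw [comp_apply, LieAlgebra.ad_apply, hD, add_comm _ s, add_sub_assoc]
  simp only [fwdDiff, hs, AddMonoidHom.coe_fst]
  congr 1
  ring

lemma lie_D_neg_e₂_fwdDiff_iter (hD : HasDetBracket D) {m : ℕ} (hm : 0 < m) (n : ℕ) :
    ⁅D (0, -1), (fwdDiff (1, 0))^[m + 1] ((fwdDiff (0, 1))^[n] D) (0, 1)⁆ =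
      ((m : ℤ) + 1) • (fwdDiff (1, 0))^[m] ((fwdDiff (0, 1))^[n + 1] D) (1, 0) := by
  rw [← LieAlgebra.ad_apply (R := ℤ), ← comp_apply (f := LieAlgebra.ad ℤ L _),
    ← fwdDiff_iter_comp_addMonoidHom, ← fwdDiff_iter_comp_addMonoidHom, ad_D_neg_e₂_comp hD,
    fwdDiff_iter_smul_addMonoidHom_of_eq_zero _ _ (by simp), fwdDiff_iter_succ_smul_addMonoidHom]
  have hshift := funext fun x ↦ fwdDiff_iter_comp_add (0, 1) (fwdDiff (0, 1) D) (0, -1) n x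
  simp only [Pi.add_apply, Pi.smul_apply, fwdDiff_iter_comp_add,
    fwdDiff_iter_fwdDiff_iter_const_add _ _ _ hm.ne', hshift, ← iterate_succ_apply]
  simp

end HasDetBracket

theorem stmt_0_general {L : Type*} [LieRing L]
    (D : ℤ × ℤ → L)
    (hD : ∀ r s : ℤ × ℤ,
      ⁅D r, D s⁆ = (r.1 * s.2 - r.2 * s.1) • (D r + D s - D (r + s)))
    (m n : ℕ) (hm : 1 ≤ m) :
    ⁅D (0, -1), ⁅D (-1, 0), (ddx^[m] (ddy^[n] D)) (1, 0)⁆⁆ =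
      (-(n * (m + 1)) : ℤ) • (ddx^[m] (ddy^[n] D)) (1, 0) := by
  rw [ddx_eq_fwdDiff, ddy_eq_fwdDiff, lie_D_neg_e₁_fwdDiff_iter hD hm]
  rcases n with _ | n
  · simp
  · rw [lie_neg, lie_nsmul, Nat.add_sub_cancel, lie_D_neg_e₂_fwdDiff_iter hD hm]
    push_cast
    module

theorem stmt_0 {L : Type*} [LieRing L] [LieAlgebra ℂ L]
    (D : ℤ × ℤ → L)
    (hD : ∀ r s : ℤ × ℤ,
      ⁅D r, D s⁆ = (r.1 * s.2 - r.2 * s.1) • (D r + D s - D (r + s)))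
    (m n : ℕ) (hm : 1 ≤ m) :
    ⁅D (0, -1), ⁅D (-1, 0), (ddx^[m] (ddy^[n] D)) (1, 0)⁆⁆ =
      (-(n * (m + 1)) : ℤ) • (ddx^[m] (ddy^[n] D)) (1, 0) :=
  stmt_0_general D hD m n hm
end

section
/- The set {αᵢ : i ∈ ℕ, ρ(yᵢ) ≠ 0} of those scalars αᵢ for which ρ(yᵢ) is nonzero has at most (dim U)² − dim U + 1 elements. -/
/-! If `⁅ρ y, ρ zᵢ⁆ = αᵢ • ρ zᵢ`, then `ρ zᵢ` maps the generalized `ν`-eigenspace of `ρ y` into the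
generalized `(ν + αᵢ)`-eigenspace. Over `ℂ` these eigenspaces span `U`, so when `ρ zᵢ ≠ 0` one of
these images is nonzero and `αᵢ` is a difference of two eigenvalues of `ρ y`. With at most
`n = dim U` eigenvalues there are at most `n² - n` nonzero such differences, plus `0`. -/

open Module Module.End Set Pointwise

attribute [local instance 100] LieRing.ofAssociativeRing

namespace Finset

variable {α : Type*} [AddGroup α] [DecidableEq α]

theorem sub_self_subset_insert_zero_image_offDiag (s : Finset α) :
    s - s ⊆ insert 0 (s.offDiag.image fun p => p.1 - p.2) := by
  intro x hx
  obtain ⟨a, ha, b, hb, rfl⟩ := mem_sub.mp hx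
  by_cases hab : a = b
  · simp [hab]
  · exact mem_insert_of_mem (mem_image.mpr ⟨(a, b), mem_offDiag.mpr ⟨ha, hb, hab⟩, rfl⟩)

theorem card_sub_self_le (s : Finset α) : (s - s).card ≤ s.card ^ 2 - s.card + 1 :=
  calc (s - s).card
      ≤ (insert 0 (s.offDiag.image fun p => p.1 - p.2)).card :=
        card_le_card s.sub_self_subset_insert_zero_image_offDiag
    _ ≤ (s.offDiag.image fun p => p.1 - p.2).card + 1 := card_insert_le _ _
    _ ≤ s.offDiag.card + 1 := by gcongr; exact card_image_le
    _ = s.card ^ 2 - s.card + 1 := by rw [offDiag_card, sq]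

end Finset

theorem Set.ncard_sub_self_le {α : Type*} [AddGroup α] {s : Set α} (hs : s.Finite) :
    (s - s).ncard ≤ s.ncard ^ 2 - s.ncard + 1 := by
  classical
  lift s to Finset α using hs
  rw [← Finset.coe_sub, ncard_coe_finset, ncard_coe_finset]
  exact s.card_sub_self_le

namespace Module.End

section CommRing

variable {R M : Type*} [CommRing R] [AddCommGroup M] [Module R M]

theorem hasEigenvalue_of_mem_maxGenEigenspace {f : End R M} {μ : R} {x : M}
    (hx : x ∈ f.maxGenEigenspace μ) (hx₀ : x ≠ 0) : f.HasEigenvalue μ :=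
  HasUnifEigenvalue.lt zero_lt_one fun h => hx₀ ((Submodule.mem_bot R).mp (h ▸ hx))

theorem semiconjBy_sub_smul_one_of_lie_eq_smul {A B : End R M} {c : R} (h : ⁅A, B⁆ = c • B)
    (ν : R) : SemiconjBy B (A - ν • 1) (A - (ν + c) • 1) := by
  rw [Ring.lie_def, sub_eq_iff_eq_add] at h
  simp only [SemiconjBy, mul_sub, sub_mul, mul_smul_comm, smul_mul_assoc, mul_one, one_mul, h,
    add_smul, add_mul]
  abel

theorem mapsTo_maxGenEigenspace_of_lie_eq_smul {A B : End R M} {c : R} (h : ⁅A, B⁆ = c • B)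
    (ν : R) : MapsTo B (A.maxGenEigenspace ν) (A.maxGenEigenspace (ν + c)) := by
  intro x hx
  obtain ⟨k, hk⟩ := (mem_maxGenEigenspace A ν x).mp hx
  refine (mem_maxGenEigenspace A (ν + c) (B x)).mpr ⟨k, ?_⟩
  rw [← Module.End.mul_apply, ← ((semiconjBy_sub_smul_one_of_lie_eq_smul h ν).pow_right k).eq,
    Module.End.mul_apply, hk, map_zero]

end CommRing

variable {K V : Type*} [Field K] [AddCommGroup V] [Module K V] [FiniteDimensional K V]

theorem ncard_hasEigenvalue_le_finrank (f : End K V) :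
    {μ | f.HasEigenvalue μ}.ncard ≤ finrank K V := by
  classical
  have hroots : {μ | f.HasEigenvalue μ} = ↑f.charpoly.roots.toFinset := by
    ext μ
    simp [hasEigenvalue_iff_isRoot_charpoly, f.charpoly_monic.ne_zero]
  calc {μ | f.HasEigenvalue μ}.ncard = f.charpoly.roots.toFinset.card := by
        rw [hroots, ncard_coe_finset]
    _ ≤ Multiset.card f.charpoly.roots := Multiset.toFinset_card_le _
    _ ≤ f.charpoly.natDegree := Polynomial.card_roots' _
    _ = finrank K V := f.charpoly_natDegree

theorem ncard_hasEigenvalue_sub_hasEigenvalue_le (f : End K V) :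
    ({μ | f.HasEigenvalue μ} - {μ | f.HasEigenvalue μ}).ncard ≤
      finrank K V ^ 2 - finrank K V + 1 := by
  have hle := f.ncard_hasEigenvalue_le_finrank
  have hmono : ∀ m n : ℕ, m ≤ n → m ^ 2 - m ≤ n ^ 2 - n := fun m n hmn => by
    simpa only [sq, Nat.mul_sub_one] using Nat.mul_le_mul hmn (Nat.sub_le_sub_right hmn 1)
  have := Set.ncard_sub_self_le f.finite_hasEigenvalue
  have := hmono _ _ hle
  omega

theorem mem_hasEigenvalue_sub_hasEigenvalue_of_lie_eq_smul [IsAlgClosed K] {A B : End K V}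
    {c : K} (h : ⁅A, B⁆ = c • B) (hB : B ≠ 0) :
    c ∈ {μ | A.HasEigenvalue μ} - {μ | A.HasEigenvalue μ} := by
  obtain ⟨ν, x, hx, hBx⟩ : ∃ ν, ∃ x ∈ A.maxGenEigenspace ν, B x ≠ 0 := by
    by_contra! hvanish
    refine hB (LinearMap.ker_eq_top.mp (eq_top_iff.mpr ?_))
    rw [← iSup_maxGenEigenspace_eq_top A]
    exact iSup_le fun ν x hx => hvanish ν x hx
  refine ⟨ν + c, hasEigenvalue_of_mem_maxGenEigenspace
      (mapsTo_maxGenEigenspace_of_lie_eq_smul h ν hx) hBx,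
    ν, hasEigenvalue_of_mem_maxGenEigenspace hx (fun hx₀ => hBx (by rw [hx₀, map_zero])),
    add_sub_cancel_left ν c⟩

end Module.End

theorem stmt_1_general {L : Type*} [LieRing L] [LieAlgebra ℂ L]
    {U : Type*} [AddCommGroup U] [Module ℂ U] [FiniteDimensional ℂ U]
    (ρ : L →ₗ⁅ℂ⁆ Module.End ℂ U)
    (y : L) (z : ℕ → L) (α : ℕ → ℂ)
    (hbr : ∀ i, ⁅y, z i⁆ = α i • z i) :
    {c : ℂ | ∃ i, α i = c ∧ ρ (z i) ≠ 0}.Finite ∧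
      {c : ℂ | ∃ i, α i = c ∧ ρ (z i) ≠ 0}.ncard ≤
        Module.finrank ℂ U ^ 2 - Module.finrank ℂ U + 1 := by
  have hsub : {c : ℂ | ∃ i, α i = c ∧ ρ (z i) ≠ 0} ⊆
      {μ | (ρ y).HasEigenvalue μ} - {μ | (ρ y).HasEigenvalue μ} := by
    rintro _ ⟨i, rfl, hi⟩
    exact mem_hasEigenvalue_sub_hasEigenvalue_of_lie_eq_smul
      (by rw [← LieHom.map_lie, hbr i, map_smul]) hi
  have hfin := (ρ y).finite_hasEigenvalue.sub (ρ y).finite_hasEigenvalue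
  exact ⟨hfin.subset hsub,
    (ncard_le_ncard hsub hfin).trans (ρ y).ncard_hasEigenvalue_sub_hasEigenvalue_le⟩

theorem stmt_1 {L : Type*} [LieRing L] [LieAlgebra ℂ L]
    {U : Type*} [AddCommGroup U] [Module ℂ U] [FiniteDimensional ℂ U]
    (ρ : L →ₗ⁅ℂ⁆ Module.End ℂ U)
    (y : L) (z : ℕ → L) (α : ℕ → ℂ)
    (hz : ∀ i, z i ≠ 0)
    (hbr : ∀ i, ⁅y, z i⁆ = α i • z i) :
    {c : ℂ | ∃ i, α i = c ∧ ρ (z i) ≠ 0}.Finite ∧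
      {c : ℂ | ∃ i, α i = c ∧ ρ (z i) ≠ 0}.ncard ≤
        Module.finrank ℂ U ^ 2 - Module.finrank ℂ U + 1 :=
  stmt_1_general ρ y z α hbr
end

section
/- Let K ≥ 0 be an integer, let x₀, …, x_K ∈ ℂ be pairwise distinct, let y₀, …, y_K ∈ ℂ be pairwise distinct, and let complex numbers a_{ij} be given for all integers i, j ≥ 0 with i + j ≤ K. Then there exists a unique polynomial P ∈ ℂ[X, Y] of total degree at most K such that P(xᵢ, yⱼ) = a_{ij} for all i, j ≥ 0 with i + j ≤ K. -/
/-!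
Work in the Newton basis `N_{ij} = ∏_{k<i} (X - x_k) ∏_{l<j} (Y - y_l)`, `i + j ≤ K`. It spans the
polynomials of total degree at most `K`, because `X^a` is a combination of the univariate Newton
polynomials of degree at most `a`. On the other hand `N_{ij}` vanishes at every node `(x_p, y_q)`
with `p < i` or `q < j`, in particular at all nodes lexicographically before `(i, j)`, but not at
`(x_i, y_j)`. So the evaluation matrix of the basis at the nodes is triangular with nonzero
diagonal: evaluation at the nodes is injective on the span, and being a square linear system it is
also surjective.
-/

open Finset

namespace Polynomial

variable {R : Type*} [CommRing R] [Nontrivial R]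

noncomputable def newtonSequence (z : ℕ → R) : Sequence R where
  elems' i := Lagrange.nodal (range i) z
  degree_eq' i := by rw [Lagrange.degree_nodal, card_range]

theorem newtonSequence_apply (z : ℕ → R) (i : ℕ) :
    newtonSequence z i = Lagrange.nodal (range i) z :=
  rfl

theorem X_pow_mem_span_newtonSequence (z : ℕ → R) (n : ℕ) :
    (X ^ n : R[X]) ∈ Submodule.span R (newtonSequence z '' Set.Iic n) := by
  rw [Sequence.span_degreeLE _ fun i _ => by
    rw [newtonSequence_apply, Lagrange.nodal_monic.leadingCoeff]; exact isUnit_one]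
  exact mem_degreeLE.2 (degree_X_pow_le n)

end Polynomial

abbrev TrianglePoint (K : ℕ) : Type :=
  {s : Fin (K + 1) ×ₗ Fin (K + 1) // ((ofLex s).1 : ℕ) + (ofLex s).2 ≤ K}

namespace TrianglePoint

variable {K : ℕ}

def fst (s : TrianglePoint K) : Fin (K + 1) := (ofLex s.1).1

def snd (s : TrianglePoint K) : Fin (K + 1) := (ofLex s.1).2

@[simp]
theorem fst_mk (i j : Fin (K + 1)) (h : (i : ℕ) + j ≤ K) : fst ⟨toLex (i, j), h⟩ = i := rfl

@[simp]
theorem snd_mk (i j : Fin (K + 1)) (h : (i : ℕ) + j ≤ K) : snd ⟨toLex (i, j), h⟩ = j := rfl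

theorem fst_add_snd_le (s : TrianglePoint K) : (s.fst : ℕ) + s.snd ≤ K := s.2

theorem fst_lt_or_snd_lt_of_lt {s t : TrianglePoint K} (h : s < t) :
    s.fst < t.fst ∨ s.snd < t.snd := by
  rcases Prod.Lex.lt_iff.1 h with h | ⟨-, h⟩
  exacts [Or.inl h, Or.inr h]

end TrianglePoint

theorem Function.Injective.prod_sub_ofNat_ne_zero {R : Type*} [CommRing R] [IsDomain R] {K : ℕ}
    {x : Fin (K + 1) → R} (hx : Function.Injective x) (p : Fin (K + 1)) :
    ∏ k ∈ range p, (x p - x (Fin.ofNat (K + 1) k)) ≠ 0 := by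
  refine prod_ne_zero_iff.2 fun k hk => sub_ne_zero.2 fun h => ?_
  have hk := mem_range.1 hk
  have := congrArg Fin.val (hx h)
  rw [Fin.val_ofNat, Nat.mod_eq_of_lt (by omega)] at this
  exact hk.ne this.symm

namespace MvPolynomial

open Polynomial (newtonSequence newtonSequence_apply toMvPolynomial)

theorem totalDegree_toMvPolynomial_nodal_le {R ι σ : Type*} [CommRing R] [Nontrivial R] (i : σ)
    (s : Finset ι) (v : ι → R) : ((Lagrange.nodal s v).toMvPolynomial i).totalDegree ≤ #s := by
  simp only [Lagrange.nodal_eq, map_prod, map_sub, Polynomial.toMvPolynomial_X,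
    Polynomial.toMvPolynomial_C]
  refine (totalDegree_finsetProd _ _).trans
    ((sum_le_card_nsmul _ _ 1 fun k _ => ?_).trans (by simp))
  exact (totalDegree_sub_C_le _ _).trans (totalDegree_X (R := R) i).le

section Newton

variable {R : Type*} [CommRing R] [Nontrivial R] (z w : ℕ → R)

noncomputable def bivariateNewton (i j : ℕ) : MvPolynomial (Fin 2) R :=
  (newtonSequence z i).toMvPolynomial 0 * (newtonSequence w j).toMvPolynomial 1

theorem eval_bivariateNewton (a b : R) (i j : ℕ) :
    eval ![a, b] (bivariateNewton z w i j) =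
      (∏ k ∈ range i, (a - z k)) * ∏ l ∈ range j, (b - w l) := by
  simp [bivariateNewton, eval_toMvPolynomial, newtonSequence_apply, Lagrange.eval_nodal]

theorem totalDegree_bivariateNewton_le (i j : ℕ) :
    (bivariateNewton z w i j).totalDegree ≤ i + j := by
  refine (totalDegree_mul _ _).trans (add_le_add ?_ ?_) <;>
    exact (totalDegree_toMvPolynomial_nodal_le _ _ _).trans (card_range _).le

theorem X_pow_mul_X_pow_mem_span_bivariateNewton (a b : ℕ) :
    X 0 ^ a * X 1 ^ b ∈
      Submodule.span R (Set.image2 (bivariateNewton z w) (Set.Iic a) (Set.Iic b)) := by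
  have h₀ := Submodule.apply_mem_span_image_of_mem_span
    (toMvPolynomial (R := R) (0 : Fin 2)).toLinearMap (Polynomial.X_pow_mem_span_newtonSequence z a)
  have h₁ := Submodule.apply_mem_span_image_of_mem_span
    (toMvPolynomial (R := R) (1 : Fin 2)).toLinearMap (Polynomial.X_pow_mem_span_newtonSequence w b)
  simp only [AlgHom.toLinearMap_apply, map_pow, Polynomial.toMvPolynomial_X] at h₀ h₁
  have := Submodule.mul_mem_mul h₀ h₁
  rwa [Submodule.span_mul_span, ← Set.image2_mul, Set.image2_image_left, Set.image2_image_right,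
    Set.image2_image_left, Set.image2_image_right] at this

end Newton

section Triangle

variable {R : Type*} [CommRing R] {K : ℕ} (x y : Fin (K + 1) → R)

noncomputable def evalTriangle : MvPolynomial (Fin 2) R →ₗ[R] TrianglePoint K → R :=
  LinearMap.pi fun s => (aeval ![x s.fst, y s.snd]).toLinearMap

theorem evalTriangle_apply (P : MvPolynomial (Fin 2) R) (s : TrianglePoint K) :
    evalTriangle x y P s = eval ![x s.fst, y s.snd] P := by
  simp [evalTriangle]

variable [IsDomain R]

-- `Fin.ofNat` extends the nodes to `ℕ` for `newtonSequence`; only indices `≤ K` are ever used.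
noncomputable def triangleNewton (s : TrianglePoint K) : MvPolynomial (Fin 2) R :=
  bivariateNewton (x ∘ Fin.ofNat (K + 1)) (y ∘ Fin.ofNat (K + 1)) s.fst s.snd

theorem eval_triangleNewton (p q : Fin (K + 1)) (t : TrianglePoint K) :
    eval ![x p, y q] (triangleNewton x y t) =
      (∏ k ∈ range t.fst, (x p - x (Fin.ofNat (K + 1) k))) *
        ∏ l ∈ range t.snd, (y q - y (Fin.ofNat (K + 1) l)) :=
  eval_bivariateNewton _ _ _ _ _ _

theorem evalTriangle_triangleNewton_of_lt {s t : TrianglePoint K} (h : s < t) :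
    evalTriangle x y (triangleNewton x y t) s = 0 := by
  rw [evalTriangle_apply, eval_triangleNewton]
  rcases TrianglePoint.fst_lt_or_snd_lt_of_lt h with h | h
  · exact mul_eq_zero_of_left (prod_eq_zero (mem_range.2 h) (by simp)) _
  · exact mul_eq_zero_of_right _ (prod_eq_zero (mem_range.2 h) (by simp))

theorem evalTriangle_triangleNewton_self_ne_zero (hx : Function.Injective x)
    (hy : Function.Injective y) (s : TrianglePoint K) :
    evalTriangle x y (triangleNewton x y s) s ≠ 0 := by
  rw [evalTriangle_apply, eval_triangleNewton]
  exact mul_ne_zero (hx.prod_sub_ofNat_ne_zero _) (hy.prod_sub_ofNat_ne_zero _)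

theorem X_pow_mul_X_pow_mem_span_triangleNewton {a b : ℕ} (hab : a + b ≤ K) :
    X 0 ^ a * X 1 ^ b ∈ Submodule.span R (Set.range (triangleNewton x y)) := by
  refine Submodule.span_mono ?_
    (X_pow_mul_X_pow_mem_span_bivariateNewton (x ∘ Fin.ofNat (K + 1)) (y ∘ Fin.ofNat (K + 1)) a b)
  rintro _ ⟨i, hi : i ≤ a, j, hj : j ≤ b, rfl⟩
  exact ⟨⟨toLex (⟨i, by omega⟩, ⟨j, by omega⟩), show i + j ≤ K by omega⟩, rfl⟩

theorem range_linearCombination_triangleNewton :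
    LinearMap.range (Fintype.linearCombination R (triangleNewton x y)) =
      restrictTotalDegree (Fin 2) R K := by
  rw [Fintype.range_linearCombination]
  apply le_antisymm
  · rw [Submodule.span_le]
    rintro _ ⟨s, rfl⟩
    exact (mem_restrictTotalDegree _ _ _).2
      ((totalDegree_bivariateNewton_le _ _ _ _).trans s.fst_add_snd_le)
  · rw [restrictTotalDegree, restrictSupport_eq_span, Submodule.span_le]
    rintro _ ⟨d, hd, rfl⟩
    have hd : d 0 + d 1 ≤ K := by simpa [Finsupp.sum_fintype] using hd
    simpa [monomial_eq, Finsupp.prod_fintype] using X_pow_mul_X_pow_mem_span_triangleNewton x y hd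

theorem injective_evalTriangle_comp_linearCombination (hx : Function.Injective x)
    (hy : Function.Injective y) :
    Function.Injective (evalTriangle x y ∘ₗ Fintype.linearCombination R (triangleNewton x y)) := by
  rw [← LinearMap.ker_eq_bot, LinearMap.ker_eq_bot']
  intro c hc
  ext s
  induction s using WellFoundedLT.induction with
  | ind s ih =>
    -- at the node `s`, the terms with `t > s` vanish and those with `t < s` have `c t = 0`
    have hs := congr_fun hc s
    simp only [LinearMap.coe_comp, Function.comp_apply, Fintype.linearCombination_apply, map_sum,
      map_smul, Finset.sum_apply, Pi.smul_apply, smul_eq_mul, Pi.zero_apply] at hs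
    rw [sum_eq_single s (fun t _ hts => ?_) (by simp)] at hs
    · exact (mul_eq_zero.1 hs).resolve_right
        (evalTriangle_triangleNewton_self_ne_zero x y hx hy s)
    · rcases hts.lt_or_gt with h | h
      · rw [ih t h, Pi.zero_apply, zero_mul]
      · rw [evalTriangle_triangleNewton_of_lt x y h, mul_zero]

theorem eq_of_evalTriangle_eq (hx : Function.Injective x) (hy : Function.Injective y)
    {P Q : MvPolynomial (Fin 2) R} (hP : P.totalDegree ≤ K) (hQ : Q.totalDegree ≤ K)
    (h : evalTriangle x y P = evalTriangle x y Q) : P = Q := by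
  obtain ⟨c, rfl⟩ : P ∈ LinearMap.range (Fintype.linearCombination R (triangleNewton x y)) := by
    rwa [range_linearCombination_triangleNewton, mem_restrictTotalDegree]
  obtain ⟨d, rfl⟩ : Q ∈ LinearMap.range (Fintype.linearCombination R (triangleNewton x y)) := by
    rwa [range_linearCombination_triangleNewton, mem_restrictTotalDegree]
  rw [injective_evalTriangle_comp_linearCombination x y hx hy h]

end Triangle

theorem exists_totalDegree_le_evalTriangle_eq {F : Type*} [Field F] {K : ℕ}
    {x y : Fin (K + 1) → F} (hx : Function.Injective x) (hy : Function.Injective y)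
    (a : TrianglePoint K → F) :
    ∃ P : MvPolynomial (Fin 2) F, P.totalDegree ≤ K ∧ evalTriangle x y P = a := by
  obtain ⟨c, hc⟩ := LinearMap.injective_iff_surjective.1
    (injective_evalTriangle_comp_linearCombination x y hx hy) a
  refine ⟨Fintype.linearCombination F (triangleNewton x y) c, ?_, hc⟩
  rw [← mem_restrictTotalDegree, ← range_linearCombination_triangleNewton x y]
  exact LinearMap.mem_range_self _ c

end MvPolynomial

theorem stmt_3 (K : ℕ) (x y : Fin (K + 1) → ℂ)
    (hx : Function.Injective x) (hy : Function.Injective y)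
    (a : Fin (K + 1) → Fin (K + 1) → ℂ) :
    ∃! P : MvPolynomial (Fin 2) ℂ, P.totalDegree ≤ K ∧
      ∀ i j : Fin (K + 1), (i : ℕ) + (j : ℕ) ≤ K →
        MvPolynomial.eval ![x i, y j] P = a i j := by
  obtain ⟨P, hdeg, hP⟩ :=
    MvPolynomial.exists_totalDegree_le_evalTriangle_eq hx hy fun s => a s.fst s.snd
  refine ⟨P, ⟨hdeg, fun i j hij => ?_⟩, fun Q ⟨hQdeg, hQ⟩ => ?_⟩
  · simpa only [MvPolynomial.evalTriangle_apply, TrianglePoint.fst_mk, TrianglePoint.snd_mk]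
      using congr_fun hP ⟨toLex (i, j), hij⟩
  · refine MvPolynomial.eq_of_evalTriangle_eq x y hx hy hQdeg hdeg ?_
    ext s
    rw [hP, MvPolynomial.evalTriangle_apply]
    exact hQ _ _ s.fst_add_snd_le
end

section
/- Let N ≥ 2 and n ≥ −1. An element v ∈ 𝔏_n satisfies [x_a ∂/∂x_b, v] = 0 for all 1 ≤ a < b ≤ N if and only if v is a scalar multiple of x₁^{n+1} ∂/∂x_N; that is, the space of highest weight vectors in 𝔏_n (together with 0) is exactly ℂ · x₁^{n+1} ∂/∂x_N. -/
open MvPolynomial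

/-- The divergence-zero vector field
`S_{ab}(k) = k_b x^{k-e_b} ∂/∂x_a − k_a x^{k-e_a} ∂/∂x_b`,
as a derivation of `ℂ[x₁, …, x_N]`. -/
noncomputable def Sab (N : ℕ) (a b : Fin N) (k : Fin N →₀ ℕ) :
    Derivation ℂ (MvPolynomial (Fin N) ℂ) (MvPolynomial (Fin N) ℂ) :=
  (monomial (k - Finsupp.single b 1) ((k b : ℂ))) • pderiv a
    - (monomial (k - Finsupp.single a 1) ((k a : ℂ))) • pderiv b

/-- The graded component `𝔏_n`: the span of the `S_{ab}(k)` with `|k| = n + 2`. -/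
noncomputable def Lcomp (N : ℕ) (n : ℤ) :
    Submodule ℂ (Derivation ℂ (MvPolynomial (Fin N) ℂ) (MvPolynomial (Fin N) ℂ)) :=
  Submodule.span ℂ {d | ∃ (a b : Fin N) (k : Fin N →₀ ℕ),
    ((k.sum fun _ m => m : ℕ) : ℤ) = n + 2 ∧ d = Sab N a b k}

/-- The vector field `x_a ∂/∂x_b` as a derivation of `ℂ[x₁, …, x_N]`. -/
noncomputable def xdel (N : ℕ) (a b : Fin N) :
    Derivation ℂ (MvPolynomial (Fin N) ℂ) (MvPolynomial (Fin N) ℂ) :=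
  (X a : MvPolynomial (Fin N) ℂ) • pderiv b

/-!
Each `S_{ab}(k)` is `∂_b f • ∂_a - ∂_a f • ∂_b` with `f = x^k` homogeneous, so every
`D ∈ 𝔏_n` has coefficients `D x_i` homogeneous of degree `m = n + 1` and zero divergence. On `x_i`
the highest weight condition `[x_a ∂_b, D] = 0` reads `x_a ∂_b (D x_i) = δ_{ib} D x_a`. With
`a = 1` it says that `D x_1` depends on `x_1` only, so Euler's identity together with
`x_1 ∂_b (D x_b) = D x_1` turns `x_1 · div D = 0` into `(m + N - 1) • D x_1 = 0`. Hence
`D x_1 = 0`, every `∂_b (D x_b)` vanishes, `D x_a = x_a ∂_N (D x_N) = 0` for `a < N`, and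
`D x_N` is a multiple of `x_1^m`.
-/

namespace MvPolynomial

variable {σ R : Type*}

section Semiring

variable [CommSemiring R] {p : MvPolynomial σ R} {i : σ} {m : ℕ}

theorem coeff_eq_zero_of_pderiv_eq_zero [CharZero R] [NoZeroDivisors R] {j : σ}
    (h : pderiv j p = 0) {d : σ →₀ ℕ} (hd : d j ≠ 0) : coeff d p = 0 := by
  have key := coeff_pderiv (i := j) p (d - Finsupp.single j 1)
  rw [h, coeff_zero, Finsupp.sub_add_single_one_cancel hd] at key
  exact (mul_eq_zero.mp key.symm).resolve_right (Nat.cast_add_one_ne_zero _)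

theorem IsHomogeneous.eq_smul_monomial_of_pderiv_eq_zero [CharZero R] [NoZeroDivisors R]
    (hp : p.IsHomogeneous m) (h : ∀ j, j ≠ i → pderiv j p = 0) :
    p = coeff (Finsupp.single i m) p • monomial (Finsupp.single i m) 1 := by
  classical
  ext d
  rw [coeff_smul, coeff_monomial, smul_eq_mul, mul_ite, mul_one, mul_zero]
  split_ifs with hd
  · rw [hd]
  by_cases hsupp : ∃ j, j ≠ i ∧ d j ≠ 0
  · obtain ⟨j, hji, hdj⟩ := hsupp
    exact coeff_eq_zero_of_pderiv_eq_zero (h j hji) hdj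
  push Not at hsupp
  have hdi : d = Finsupp.single i (d i) := by
    ext j
    rcases eq_or_ne j i with rfl | hji
    · simp
    · simp [hsupp j hji, Finsupp.single_eq_of_ne hji]
  apply hp.coeff_eq_zero
  rw [hdi, Finsupp.degree_single]
  rintro rfl
  exact hd hdi.symm

theorem IsHomogeneous.X_mul_pderiv_of_pderiv_eq_zero [Fintype σ] (hp : p.IsHomogeneous m)
    (h : ∀ j, j ≠ i → pderiv j p = 0) : X i * pderiv i p = m • p := by
  rw [← hp.sum_X_mul_pderiv, Finset.sum_eq_single i (fun j _ hj => by rw [h j hj, mul_zero])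
    (fun hi => (hi (Finset.mem_univ i)).elim)]

end Semiring

variable [CommRing R]

theorem pderiv_pderiv_comm (i j : σ) (f : MvPolynomial σ R) :
    pderiv i (pderiv j f) = pderiv j (pderiv i f) := by
  classical
  suffices h :
      ⁅pderiv i, pderiv j⁆ = (0 : Derivation R (MvPolynomial σ R) (MvPolynomial σ R)) by
    have := congr($h f)
    rwa [Derivation.commutator_apply, Derivation.zero_apply, sub_eq_zero] at this
  refine derivation_ext fun k => ?_
  simp [Derivation.commutator_apply, pderiv_X, Pi.single_apply, apply_ite]

theorem smul_pderiv_apply_X [DecidableEq σ] (p : MvPolynomial σ R) (i j : σ) :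
    (p • pderiv (R := R) j) (X i) = if i = j then p else 0 := by
  rw [Derivation.smul_apply, smul_eq_mul]
  rcases eq_or_ne i j with rfl | hij
  · rw [pderiv_X_self, mul_one, if_pos rfl]
  · rw [pderiv_X_of_ne hij, mul_zero, if_neg hij]

theorem commutator_X_smul_pderiv_apply_X [DecidableEq σ] (a b i : σ)
    (D : Derivation R (MvPolynomial σ R) (MvPolynomial σ R)) :
    ⁅(X a : MvPolynomial σ R) • pderiv (R := R) b, D⁆ (X i) =
      X a * pderiv b (D (X i)) - if i = b then D (X a) else 0 := by
  rw [Derivation.commutator_apply, smul_pderiv_apply_X, Derivation.smul_apply, smul_eq_mul,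
    apply_ite D, map_zero]

variable (σ R) [Fintype σ]

def homogeneousDivFree (m : ℕ) :
    Submodule R (Derivation R (MvPolynomial σ R) (MvPolynomial σ R)) where
  carrier := {D | (∀ i, (D (X i)).IsHomogeneous m) ∧ ∑ i, pderiv i (D (X i)) = 0}
  add_mem' := by
    rintro D E ⟨hD, hD'⟩ ⟨hE, hE'⟩
    refine ⟨fun i => (hD i).add (hE i), ?_⟩
    simp only [Derivation.add_apply, map_add, Finset.sum_add_distrib, hD', hE', add_zero]
  zero_mem' := ⟨fun _ => isHomogeneous_zero _ _ _, by simp⟩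
  smul_mem' := by
    rintro c D ⟨hD, hD'⟩
    refine ⟨fun i => ?_, ?_⟩
    · rw [Derivation.smul_apply, smul_eq_C_mul]
      exact (hD i).C_mul c
    · simp only [Derivation.smul_apply, Derivation.map_smul, ← Finset.smul_sum, hD', smul_zero]

variable {σ R}

theorem pderiv_smul_pderiv_sub_mem_homogeneousDivFree {f : MvPolynomial σ R} {d : ℕ}
    (hf : f.IsHomogeneous d) (a b : σ) :
    pderiv b f • pderiv a - pderiv a f • pderiv b ∈ homogeneousDivFree σ R (d - 1) := by
  classical
  have hX : ∀ i, (pderiv b f • pderiv a - pderiv a f • pderiv b :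
      Derivation R (MvPolynomial σ R) (MvPolynomial σ R)) (X i) =
      (if i = a then pderiv b f else 0) - if i = b then pderiv a f else 0 := fun i => by
    rw [Derivation.sub_apply, smul_pderiv_apply_X, smul_pderiv_apply_X]
  refine ⟨fun i => ?_, ?_⟩
  · rw [hX]
    refine .sub ?_ ?_ <;> split_ifs <;>
      first | exact hf.pderiv | exact isHomogeneous_zero _ _ _
  · simp only [hX, map_sub, apply_ite (pderiv _), map_zero, Finset.sum_sub_distrib,
      Finset.sum_ite_eq', Finset.mem_univ, if_true, pderiv_pderiv_comm, sub_self]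

end MvPolynomial

theorem Sab_eq_pderiv_monomial (N : ℕ) (a b : Fin N) (k : Fin N →₀ ℕ) :
    Sab N a b k = pderiv b (monomial k (1 : ℂ)) • pderiv a
      - pderiv a (monomial k (1 : ℂ)) • pderiv b := by
  simp only [Sab, pderiv_monomial, one_mul]

theorem Lcomp_le_homogeneousDivFree (N : ℕ) (n : ℤ) :
    Lcomp N n ≤ homogeneousDivFree (Fin N) ℂ (n + 1).toNat := by
  refine Submodule.span_le.mpr ?_
  rintro _ ⟨a, b, k, hk, rfl⟩
  have hdeg : k.degree - 1 = (n + 1).toNat := by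
    change ((k.degree : ℕ) : ℤ) = n + 2 at hk
    omega
  rw [Sab_eq_pderiv_monomial, ← hdeg]
  exact pderiv_smul_pderiv_sub_mem_homogeneousDivFree (isHomogeneous_monomial _ rfl) a b

section HighestWeight

variable {σ R : Type*} [LinearOrder σ] [CommRing R]

def IsHighestWeight (D : Derivation R (MvPolynomial σ R) (MvPolynomial σ R)) : Prop :=
  ∀ a b : σ, a < b → ⁅(X a : MvPolynomial σ R) • pderiv (R := R) b, D⁆ = 0

variable {D : Derivation R (MvPolynomial σ R) (MvPolynomial σ R)}

theorem isHighestWeight_iff :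
    IsHighestWeight D ↔
      ∀ a b : σ, a < b → ∀ i, X a * pderiv b (D (X i)) = if i = b then D (X a) else 0 := by
  simp only [IsHighestWeight, ← sub_eq_zero (a := X _ * _), ← commutator_X_smul_pderiv_apply_X]
  refine forall₃_congr fun a b _ => ⟨fun h i => by rw [h, Derivation.zero_apply], fun h => ?_⟩
  exact derivation_ext h

theorem isHighestWeight_smul_monomial_smul_pderiv {lo hi : σ} (hlo : IsBot lo) (hhi : IsTop hi)
    (c : R) (m : ℕ) :
    IsHighestWeight (c • (monomial (Finsupp.single lo m) (1 : R) • pderiv (R := R) hi)) := by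
  refine isHighestWeight_iff.mpr fun a b hab i => ?_
  have ha : a ≠ hi := (hab.trans_le (hhi b)).ne
  have hM : pderiv b (monomial (Finsupp.single lo m) (1 : R)) = 0 := by
    rw [pderiv_monomial, Finsupp.single_eq_of_ne ((hlo a).trans_lt hab).ne', Nat.cast_zero,
      mul_zero, monomial_zero]
  rw [← smul_assoc, smul_pderiv_apply_X, smul_pderiv_apply_X]
  simp [ha, hM, apply_ite (pderiv b)]

theorem IsHighestWeight.X_mul_pderiv_apply_X_self (hw : IsHighestWeight D) {a b : σ}
    (hab : a < b) : X a * pderiv b (D (X b)) = D (X a) := by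
  simpa using isHighestWeight_iff.mp hw a b hab b

variable [IsDomain R] [CharZero R] {lo : σ} {m : ℕ}

theorem IsHighestWeight.pderiv_apply_X_eq_zero (hw : IsHighestWeight D) (hlo : IsBot lo)
    {b i : σ} (hb : b ≠ lo) (hib : i ≠ b) : pderiv b (D (X i)) = 0 := by
  have h := isHighestWeight_iff.mp hw lo b (hlo.lt_of_ne hb.symm) i
  rw [if_neg hib] at h
  exact (mul_eq_zero.mp h).resolve_left (X_ne_zero _)

variable [Fintype σ] [Nontrivial σ] (hlo : IsBot lo) (hD : D ∈ homogeneousDivFree σ R m)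
include hlo hD

theorem IsHighestWeight.apply_X_bot_eq_zero (hw : IsHighestWeight D) : D (X lo) = 0 := by
  set p := D (X lo)
  have hEuler : X lo * pderiv lo p = m • p :=
    (hD.1 lo).X_mul_pderiv_of_pderiv_eq_zero fun j hj => hw.pderiv_apply_X_eq_zero hlo hj hj.symm
  have hsum : (m + (Finset.univ.erase lo).card) • p = 0 := calc
    (m + (Finset.univ.erase lo).card) • p = X lo * ∑ j, pderiv j (D (X j)) := by
      rw [Finset.mul_sum, ← Finset.add_sum_erase _ _ (Finset.mem_univ lo), hEuler,
        Finset.sum_congr rfl fun j hj =>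
          hw.X_mul_pderiv_apply_X_self ((hlo j).lt_of_ne (Finset.ne_of_mem_erase hj).symm),
        Finset.sum_const, add_smul]
    _ = 0 := by rw [hD.2, mul_zero]
  obtain ⟨j, hj⟩ := exists_ne lo
  have hcard : 0 < (Finset.univ.erase lo).card := Finset.card_pos.mpr ⟨j, by simp [hj]⟩
  exact (smul_eq_zero.mp hsum).resolve_left (by omega)

theorem IsHighestWeight.pderiv_apply_X_self_eq_zero (hw : IsHighestWeight D) (b : σ) :
    pderiv b (D (X b)) = 0 := by
  rcases eq_or_ne b lo with rfl | hb
  · rw [hw.apply_X_bot_eq_zero hlo hD, map_zero]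
  · refine (mul_eq_zero.mp ?_).resolve_left (X_ne_zero lo)
    rw [hw.X_mul_pderiv_apply_X_self ((hlo b).lt_of_ne hb.symm), hw.apply_X_bot_eq_zero hlo hD]

theorem IsHighestWeight.exists_eq_smul_monomial_smul_pderiv (hw : IsHighestWeight D) {hi : σ}
    (hhi : IsTop hi) :
    ∃ c : R, D = c • (monomial (Finsupp.single lo m) (1 : R) • pderiv (R := R) hi) := by
  have hpderiv : ∀ j, j ≠ lo → pderiv j (D (X hi)) = 0 := fun j hj => by
    rcases eq_or_ne j hi with rfl | hji
    · exact hw.pderiv_apply_X_self_eq_zero hlo hD j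
    · exact hw.pderiv_apply_X_eq_zero hlo hj hji.symm
  refine ⟨coeff (Finsupp.single lo m) (D (X hi)), derivation_ext fun i => ?_⟩
  rw [← smul_assoc, smul_pderiv_apply_X]
  split_ifs with hi
  · subst hi
    exact (hD.1 i).eq_smul_monomial_of_pderiv_eq_zero hpderiv
  · rw [← hw.X_mul_pderiv_apply_X_self ((hhi i).lt_of_ne hi),
      hw.pderiv_apply_X_self_eq_zero hlo hD, mul_zero]

end HighestWeight

theorem stmt_11 (N : ℕ) (hN : 2 ≤ N) (n : ℤ)
    (v : Derivation ℂ (MvPolynomial (Fin N) ℂ) (MvPolynomial (Fin N) ℂ))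
    (hv : v ∈ Lcomp N n) :
    (∀ a b : Fin N, a < b → ⁅xdel N a b, v⁆ = 0) ↔
      ∃ c : ℂ, v = c •
        ((monomial (Finsupp.single (⟨0, by omega⟩ : Fin N) (n + 1).toNat) (1 : ℂ)) •
          pderiv (⟨N - 1, by omega⟩ : Fin N)) := by
  have : Nontrivial (Fin N) := Fin.nontrivial_iff_two_le.mpr hN
  have hlo : IsBot (⟨0, by omega⟩ : Fin N) := fun j => Nat.zero_le j.val
  have hhi : IsTop (⟨N - 1, by omega⟩ : Fin N) := fun j => Nat.le_sub_one_of_lt j.isLt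
  constructor
  · exact fun hw => IsHighestWeight.exists_eq_smul_monomial_smul_pderiv hlo
      (Lcomp_le_homogeneousDivFree N n hv) hw hhi
  · rintro ⟨c, rfl⟩
    exact isHighestWeight_smul_monomial_smul_pderiv hlo hhi c _
end
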